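/- Let λ > 0 and let d' be constant (d(t) = δ for all t, δ ∈ ℝ). With F the filter λ/(p+λ) with zero initial condition and p F[w] := λ(w − F[w]) its derivative output, the perturbed output y = x₁ + δ of the double integrator x₁' = x₂, x₂' = u satisfies p F[y](t) = p F[x₁](t) + λ δ e^{-λ t} for all t ≥ 0. Consequently, the ASLO estimate p F[y] + (1/λ)F[u] differs from the unperturbed one by a term converging to zero exponentially, i.e., the ASLO is asymptotically insensitive to constant output disturbances. -/

import Mathlib

open Real Filter Topology

/-! The difference of the filter states `F[y] - F[x₁]` is itself a first-order lag driven by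
the constant `δ` from a zero initial condition, so it equals `δ (1 - e^{-λt})`. Hence the
derivative outputs `λ (w - F[w])` differ by `λ δ e^{-λt}`, which vanishes as `t → ∞`. -/

theorem eq_add_mul_exp_of_hasDerivAt {f : ℝ → ℝ} {lam c : ℝ}
    (hf : ∀ t, HasDerivAt f (-lam * (f t - c)) t) (t : ℝ) :
    f t = c + (f 0 - c) * exp (-lam * t) := by
  have hderiv : ∀ s, HasDerivAt (fun s => (f s - c) * exp (lam * s)) 0 s := by
    intro s
    have hexp : HasDerivAt (fun s => exp (lam * s)) (exp (lam * s) * lam) s := by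
      simpa using ((hasDerivAt_id s).const_mul lam).exp
    exact (((hf s).sub_const c).mul hexp).congr_deriv (by ring)
  have hconst : (f t - c) * exp (lam * t) = f 0 - c := by
    simpa using is_const_of_deriv_eq_zero (fun s => (hderiv s).differentiableAt)
      (fun s => (hderiv s).deriv) t 0
  have hinv : exp (lam * t) * exp (-lam * t) = 1 := by
    rw [← exp_add]; simp
  linear_combination exp (-lam * t) * hconst - (f t - c) * hinv

theorem lowPass_sub_of_input_add_const {F G w : ℝ → ℝ} {lam δ : ℝ}
    (hF : ∀ t, HasDerivAt F (-lam * F t + lam * w t) t)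
    (hG : ∀ t, HasDerivAt G (-lam * G t + lam * (w t + δ)) t) (t : ℝ) :
    G t - F t = δ + (G 0 - F 0 - δ) * exp (-lam * t) :=
  eq_add_mul_exp_of_hasDerivAt
    (fun s => ((hG s).sub (hF s)).congr_deriv (by simp only [Pi.sub_apply]; ring)) t

theorem tendsto_const_mul_exp_neg_mul_atTop {lam : ℝ} (hlam : 0 < lam) (C : ℝ) :
    Tendsto (fun t => C * exp (-lam * t)) atTop (𝓝 0) := by
  have hexp : Tendsto (fun t => exp (-lam * t)) atTop (𝓝 0) :=
    tendsto_exp_comp_nhds_zero.2 (tendsto_id.const_mul_atTop_of_neg (neg_lt_zero.2 hlam))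
  simpa using hexp.const_mul C

theorem stmt4_general (lam delta : ℝ) (hlam : 0 < lam)
    (x1 y Fy Fx1 Fu : ℝ → ℝ)
    (hy : ∀ t, y t = x1 t + delta)
    (hFy0 : Fy 0 = 0) (hFy : ∀ t, HasDerivAt Fy (-lam * Fy t + lam * y t) t)
    (hFx10 : Fx1 0 = 0)
    (hFx1 : ∀ t, HasDerivAt Fx1 (-lam * Fx1 t + lam * x1 t) t) :
    (∀ t ≥ (0 : ℝ),
      lam * (y t - Fy t) = lam * (x1 t - Fx1 t) + lam * delta * Real.exp (-lam * t))
    ∧ Filter.Tendsto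
        (fun t => (lam * (y t - Fy t) + (1 / lam) * Fu t)
          - (lam * (x1 t - Fx1 t) + (1 / lam) * Fu t))
        Filter.atTop (nhds 0) := by
  have hoffset : ∀ t, lam * (y t - Fy t)
      = lam * (x1 t - Fx1 t) + lam * delta * exp (-lam * t) := by
    intro t
    have hdiff := lowPass_sub_of_input_add_const hFx1 (fun s => hy s ▸ hFy s) t
    rw [hFy0, hFx10] at hdiff
    rw [hy t]
    linear_combination (-lam) * hdiff
  refine ⟨fun t _ => hoffset t, ?_⟩
  simpa only [hoffset, add_sub_add_right_eq_sub, add_sub_cancel_left]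
    using tendsto_const_mul_exp_neg_mul_atTop hlam (lam * delta)

/-- Robustness to constant output disturbances (Observation O4): with
`y = x₁ + δ`, the derivative output satisfies
`pF[y](t) = pF[x₁](t) + λ δ e^{-λt}`, hence the ASLO estimate differs from the
unperturbed one by an exponentially vanishing term. -/
theorem stmt4 (lam delta : ℝ) (hlam : 0 < lam)
    (u x1 x2 y Fy Fx1 Fu : ℝ → ℝ)
    (hx1 : ∀ t, HasDerivAt x1 (x2 t) t)
    (hx2 : ∀ t, HasDerivAt x2 (u t) t)
    (hy : ∀ t, y t = x1 t + delta)
    (hFy0 : Fy 0 = 0) (hFy : ∀ t, HasDerivAt Fy (-lam * Fy t + lam * y t) t)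
    (hFx10 : Fx1 0 = 0)
    (hFx1 : ∀ t, HasDerivAt Fx1 (-lam * Fx1 t + lam * x1 t) t)
    (hFu0 : Fu 0 = 0) (hFu : ∀ t, HasDerivAt Fu (-lam * Fu t + lam * u t) t) :
    (∀ t ≥ (0 : ℝ),
      lam * (y t - Fy t) = lam * (x1 t - Fx1 t) + lam * delta * Real.exp (-lam * t))
    ∧ Filter.Tendsto
        (fun t => (lam * (y t - Fy t) + (1 / lam) * Fu t)
          - (lam * (x1 t - Fx1 t) + (1 / lam) * Fu t))
        Filter.atTop (nhds 0) :=
  stmt4_general lam delta hlam x1 y Fy Fx1 Fu hy hFy0 hFy hFx10 hFx1
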